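/- (Corollary: single-sentence pp-characterization.) Let A be a fixed finite MTL-chain, P a predicate language, and φ a P-sentence that has an A-model. Then φ is 1-equivalent to a positive-primitive sentence if and only if the class of A-models of φ is closed under homomorphisms and weak A-direct products. -/

import Mathlib

noncomputable section
open Classical

universe u

/-- A finite MTL-chain: a finite linearly ordered set with least and greatest
elements, a commutative monoid operation `*` with unit `1 = ⊤` that is monotone
in each argument, and the residuum determined by `a * b ≤ c ↔ a ≤ resid b c`. -/
class MTLChain (A : Type u) extends Fintype A, LinearOrder A, CommMonoid A, BoundedOrder A where
  one_eq_top : (1 : A) = ⊤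
  mul_mono : ∀ {a b : A}, a ≤ b → ∀ c : A, c * a ≤ c * b
  resid : A → A → A
  resid_galois : ∀ a b c : A, a * b ≤ c ↔ a ≤ resid b c

noncomputable instance MTLChain.toCompleteLinearOrder (A : Type u) [MTLChain A] :
    CompleteLinearOrder A :=
  Fintype.toCompleteLinearOrder A

/-- A predicate language: predicate symbols and function symbols, each with
a finite arity.  (Nullary predicates are truth constants, nullary functions
are individual constants.)  Crisp equality `≈` is built into formulas. -/
structure Lang : Type (u + 1) where
  Pred : Type u
  predAr : Pred → ℕ
  Func : Type u
  funcAr : Func → ℕ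

variable {A : Type u} [MTLChain A] {L : Lang.{u}}

/-- Terms of a predicate language, with variables indexed by `ℕ`. -/
inductive Term (L : Lang.{u}) : Type u where
  | var : ℕ → Term L
  | func (f : L.Func) (ts : Fin (L.funcAr f) → Term L) : Term L

/-- Formulas: atomic formulas (predicates applied to terms, and crisp equality),
strong conjunction `&`, weak conjunction `∧`, weak disjunction `∨`,
implication `→`, and the quantifiers. -/
inductive Formula (L : Lang.{u}) : Type u where
  | rel (P : L.Pred) (ts : Fin (L.predAr P) → Term L) : Formula L
  | eq (t₁ t₂ : Term L) : Formula L
  | sconj (φ ψ : Formula L) : Formula L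
  | wconj (φ ψ : Formula L) : Formula L
  | wdisj (φ ψ : Formula L) : Formula L
  | impl (φ ψ : Formula L) : Formula L
  | all (x : ℕ) (φ : Formula L) : Formula L
  | ex (x : ℕ) (φ : Formula L) : Formula L

/-- An `A`-structure for the language `L`: a nonempty domain, an `A`-valued
interpretation of each predicate symbol, and an interpretation of each
function symbol. -/
structure Structure (L : Lang.{u}) (A : Type u) [MTLChain A] : Type (u + 1) where
  Dom : Type u
  [dom_nonempty : Nonempty Dom]
  funMap (f : L.Func) : (Fin (L.funcAr f) → Dom) → Dom
  relMap (P : L.Pred) : (Fin (L.predAr P) → Dom) → A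

attribute [instance] Structure.dom_nonempty

/-- Value of a term under an evaluation of the variables. -/
def Term.val (M : Structure L A) (v : ℕ → M.Dom) : Term L → M.Dom
  | .var n => v n
  | .func f ts => M.funMap f fun i => (ts i).val M v

/-- Truth value of a formula in an `A`-structure under an evaluation of the
variables.  Equality is crisp, `&` is interpreted by `*`, `∧` by minimum,
`∨` by maximum, `→` by the residuum, `∀` by infimum (= minimum) and `∃` by
supremum (= maximum) over the domain. -/
def Formula.val (M : Structure L A) : Formula L → (ℕ → M.Dom) → A
  | .rel P ts, v => M.relMap P fun i => (ts i).val M v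
  | .eq t₁ t₂, v => if t₁.val M v = t₂.val M v then 1 else ⊥
  | .sconj φ ψ, v => φ.val M v * ψ.val M v
  | .wconj φ ψ, v => φ.val M v ⊓ ψ.val M v
  | .wdisj φ ψ, v => φ.val M v ⊔ ψ.val M v
  | .impl φ ψ, v => MTLChain.resid (φ.val M v) (ψ.val M v)
  | .all x φ, v => ⨅ a : M.Dom, φ.val M (Function.update v x a)
  | .ex x φ, v => ⨆ a : M.Dom, φ.val M (Function.update v x a)

/-- Free variables of a term. -/
def Term.fvars : Term L → Set ℕ
  | .var n => {n}
  | .func _ ts => ⋃ i, (ts i).fvars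

/-- Free variables of a formula. -/
def Formula.fvars : Formula L → Set ℕ
  | .rel _ ts => ⋃ i, (ts i).fvars
  | .eq t₁ t₂ => t₁.fvars ∪ t₂.fvars
  | .sconj φ ψ => φ.fvars ∪ ψ.fvars
  | .wconj φ ψ => φ.fvars ∪ ψ.fvars
  | .wdisj φ ψ => φ.fvars ∪ ψ.fvars
  | .impl φ ψ => φ.fvars ∪ ψ.fvars
  | .all x φ => φ.fvars \ {x}
  | .ex x φ => φ.fvars \ {x}

/-- A sentence is a formula with no free variables. -/
def Formula.IsSentence (φ : Formula L) : Prop := φ.fvars = ∅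

/-- `φ` is valid in `M` (i.e. `‖φ‖_M = 1`). -/
def Valid (M : Structure L A) (φ : Formula L) : Prop :=
  ∀ v : ℕ → M.Dom, φ.val M v = 1

/-- `M` is an `A`-model of the set of sentences `T`. -/
def Models (M : Structure L A) (T : Set (Formula L)) : Prop :=
  ∀ φ ∈ T, Valid M φ

/-- Two structures are elementarily equivalent if the same sentences are valid
in both (i.e. they have the same theory). -/
def ElemEquiv (M N : Structure L A) : Prop :=
  ∀ φ : Formula L, φ.IsSentence → (Valid M φ ↔ Valid N φ)

/-- `g : M → N` is a homomorphism of `A`-structures: it commutes with the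
interpretation of function symbols, and preserves truth (value `1`) of
atomic predicates. -/
structure IsHom (M N : Structure L A) (g : M.Dom → N.Dom) : Prop where
  map_fun : ∀ (f : L.Func) (d : Fin (L.funcAr f) → M.Dom),
    g (M.funMap f d) = N.funMap f (g ∘ d)
  map_rel : ∀ (P : L.Pred) (d : Fin (L.predAr P) → M.Dom),
    M.relMap P d = 1 → N.relMap P (g ∘ d) = 1

/-- Atomic formulas. -/
inductive IsAtomicFormula : Formula L → Prop
  | rel (P : L.Pred) (ts : Fin (L.predAr P) → Term L) : IsAtomicFormula (.rel P ts)
  | eq (t₁ t₂ : Term L) : IsAtomicFormula (.eq t₁ t₂)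

/-- Quantifier-free formulas built from atomic formulas using only `∧` and `&`. -/
inductive QFConj : Formula L → Prop
  | atom {φ : Formula L} : IsAtomicFormula φ → QFConj φ
  | sconj {φ ψ : Formula L} : QFConj φ → QFConj ψ → QFConj (.sconj φ ψ)
  | wconj {φ ψ : Formula L} : QFConj φ → QFConj ψ → QFConj (.wconj φ ψ)

/-- Quantifier-free formulas built from atomic formulas using only `∧`. -/
inductive QFWConj : Formula L → Prop
  | atom {φ : Formula L} : IsAtomicFormula φ → QFWConj φ
  | wconj {φ ψ : Formula L} : QFWConj φ → QFWConj ψ → QFWConj (.wconj φ ψ)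

/-- Quantifier-free formulas built from atomic formulas using only `&`. -/
inductive QFSConj : Formula L → Prop
  | atom {φ : Formula L} : IsAtomicFormula φ → QFSConj φ
  | sconj {φ ψ : Formula L} : QFSConj φ → QFSConj ψ → QFSConj (.sconj φ ψ)

/-- Quantifier-free formulas built from atomic formulas using only `∧`, `∨` and `&`. -/
inductive QFPos : Formula L → Prop
  | atom {φ : Formula L} : IsAtomicFormula φ → QFPos φ
  | sconj {φ ψ : Formula L} : QFPos φ → QFPos ψ → QFPos (.sconj φ ψ)
  | wconj {φ ψ : Formula L} : QFPos φ → QFPos ψ → QFPos (.wconj φ ψ)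
  | wdisj {φ ψ : Formula L} : QFPos φ → QFPos ψ → QFPos (.wdisj φ ψ)

/-- Positive-primitive (∧&-primitive) formulas: `(∃ x̄) ψ` with `ψ`
quantifier-free built from atomic formulas using only `∧` and `&`. -/
inductive IsPP : Formula L → Prop
  | base {φ : Formula L} : QFConj φ → IsPP φ
  | ex {φ : Formula L} (x : ℕ) : IsPP φ → IsPP (.ex x φ)

/-- ∧-primitive formulas. -/
inductive IsWPrimitive : Formula L → Prop
  | base {φ : Formula L} : QFWConj φ → IsWPrimitive φ
  | ex {φ : Formula L} (x : ℕ) : IsWPrimitive φ → IsWPrimitive (.ex x φ)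

/-- &-primitive formulas. -/
inductive IsSPrimitive : Formula L → Prop
  | base {φ : Formula L} : QFSConj φ → IsSPrimitive φ
  | ex {φ : Formula L} (x : ℕ) : IsSPrimitive φ → IsSPrimitive (.ex x φ)

/-- Existential positive formulas: `(∃ x̄) ψ` with `ψ` quantifier-free built
from atomic formulas using only `∧`, `∨` and `&`. -/
inductive IsExPos : Formula L → Prop
  | base {φ : Formula L} : QFPos φ → IsExPos φ
  | ex {φ : Formula L} (x : ℕ) : IsExPos φ → IsExPos (.ex x φ)

/-- The `A`-direct product of a nonempty family of `A`-structures: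
cartesian product domain, coordinatewise interpretation of function symbols,
and predicates interpreted by the minimum of the coordinatewise values. -/
def dirProd {I : Type u} [Nonempty I] (Ms : I → Structure L A) : Structure L A where
  Dom := ∀ i, (Ms i).Dom
  funMap f d := fun i => (Ms i).funMap f fun k => d k i
  relMap P d := ⨅ i, (Ms i).relMap P fun k => d k i

/-- The data of a weak `A`-direct product of a family of `A`-structures: an
interpretation of the predicate symbols on the cartesian product taking value
`1` exactly when all the coordinatewise values are `1`. -/
structure WeakProdData {I : Type u} (Ms : I → Structure L A) : Type u where
  relMap (P : L.Pred) : (Fin (L.predAr P) → ∀ i, (Ms i).Dom) → A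
  rel_one_iff : ∀ (P : L.Pred) (d : Fin (L.predAr P) → ∀ i, (Ms i).Dom),
    relMap P d = 1 ↔ ∀ i, (Ms i).relMap P (fun k => d k i) = 1

/-- The weak `A`-direct product structure determined by such data. -/
def WeakProdData.toStructure {I : Type u} [Nonempty I] {Ms : I → Structure L A}
    (W : WeakProdData Ms) : Structure L A where
  Dom := ∀ i, (Ms i).Dom
  funMap f d := fun i => (Ms i).funMap f fun k => d k i
  relMap := W.relMap

/-!
A pp sentence is the existential closure of a `∧`/`&`-conjunction of atoms, and since `a * b = 1`
and `a ⊓ b = 1` both mean `a = b = 1`, it takes value `1` exactly when one assignment makes every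
atom `1`. Such assignments are transported by homomorphisms and assembled coordinatewise in weak
products, which gives one direction.

Conversely, let the models of `φ` be closed under homomorphisms and weak products, and let `N`
satisfy every pp consequence of `φ`. The direct product `M` of a model of `φ` with, for each pp
sentence false in `N`, a model of `φ` refuting it, is a model of `φ` whose pp sentences all hold
in `N`. Every finite part of the positive diagram of `M` is a pp sentence, hence realised in `N`;
along an ultrafilter these partial maps glue to a homomorphism `M → N^U`, so `N^U ⊨ φ` and `N ⊨ φ`
by Łoś. Compactness (Łoś again) reduces the pp consequences of `φ` to finitely many, and their
conjunction is a single pp sentence once their variables are renamed apart.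
-/

namespace MTLChain

variable {A : Type u} [MTLChain A]

theorem le_one (a : A) : a ≤ 1 := one_eq_top (A := A) ▸ le_top

theorem mul_le_right (a b : A) : a * b ≤ b := by
  simpa [mul_comm] using mul_mono (le_one a) b

theorem mul_eq_one_iff {a b : A} : a * b = 1 ↔ a = 1 ∧ b = 1 := by
  refine ⟨fun h => ⟨?_, ?_⟩, fun ⟨ha, hb⟩ => by rw [ha, hb, one_mul]⟩
  · exact (le_one a).antisymm (h ▸ mul_comm a b ▸ mul_le_right b a)
  · exact (le_one b).antisymm (h ▸ mul_le_right a b)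

theorem inf_eq_one_iff {a b : A} : a ⊓ b = 1 ↔ a = 1 ∧ b = 1 := by
  rw [one_eq_top]; exact inf_eq_top_iff

theorem bot_ne_one [Nontrivial A] : (⊥ : A) ≠ 1 := one_eq_top (A := A) ▸ bot_ne_top

theorem exists_eq_iSup {D : Sort*} [Nonempty D] (f : D → A) : ∃ d, f d = ⨆ x, f x :=
  (Set.range_nonempty f).csSup_mem (Set.toFinite _)

theorem exists_eq_iInf {D : Sort*} [Nonempty D] (f : D → A) : ∃ d, f d = ⨅ x, f x :=
  (Set.range_nonempty f).csInf_mem (Set.toFinite _)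

theorem iSup_eq_one_iff {D : Sort*} [Nonempty D] (f : D → A) : (⨆ x, f x) = 1 ↔ ∃ d, f d = 1 := by
  refine ⟨fun h => ?_, fun ⟨d, hd⟩ => (le_one _).antisymm (hd ▸ le_iSup f d)⟩
  obtain ⟨d, hd⟩ := exists_eq_iSup f
  exact ⟨d, hd.trans h⟩

theorem iInf_eq_one_iff {D : Sort*} (f : D → A) : (⨅ x, f x) = 1 ↔ ∀ d, f d = 1 := by
  rw [one_eq_top, iInf_eq_top]

end MTLChain

open MTLChain

theorem Term.val_congr {M : Structure L A} {v w : ℕ → M.Dom} :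
    ∀ {t : Term L}, (∀ n ∈ t.fvars, v n = w n) → t.val M v = t.val M w
  | .var n, h => h n rfl
  | .func f _, h => congrArg (M.funMap f) <| funext fun k =>
      Term.val_congr fun n hn => h n (Set.mem_iUnion.2 ⟨k, hn⟩)

theorem Formula.val_congr {M : Structure L A} :
    ∀ {φ : Formula L} {v w : ℕ → M.Dom}, (∀ n ∈ φ.fvars, v n = w n) → φ.val M v = φ.val M w
  | .rel P ts, _, _, h => congrArg (M.relMap P) <| funext fun k =>
      Term.val_congr fun n hn => h n (Set.mem_iUnion.2 ⟨k, hn⟩)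
  | .eq t₁ t₂, _, _, h => by
    simp only [Formula.val, Term.val_congr fun n hn => h n (Or.inl hn),
      Term.val_congr fun n hn => h n (Or.inr hn)]
  | .sconj φ ψ, _, _, h | .wconj φ ψ, _, _, h | .wdisj φ ψ, _, _, h | .impl φ ψ, _, _, h => by
    simp only [Formula.val, Formula.val_congr fun n hn => h n (Or.inl hn),
      Formula.val_congr (φ := ψ) fun n hn => h n (Or.inr hn)]
  | .all x φ, _, _, h | .ex x φ, _, _, h => by
    simp only [Formula.val]
    congr 1; funext a
    refine Formula.val_congr fun n hn => ?_
    rcases eq_or_ne n x with rfl | hx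
    · simp
    · simp [Function.update_of_ne hx, h n ⟨hn, hx⟩]

theorem Formula.IsSentence.valid_iff {φ : Formula L} (hφ : φ.IsSentence) {M : Structure L A}
    (v : ℕ → M.Dom) : Valid M φ ↔ φ.val M v = 1 :=
  ⟨fun h => h v, fun h w => (Formula.val_congr (by simp [show φ.fvars = ∅ from hφ])).trans h⟩

theorem Term.fvars_finite : ∀ t : Term L, t.fvars.Finite
  | .var n => Set.finite_singleton n
  | .func _ ts => Set.finite_iUnion fun k => (ts k).fvars_finite

theorem Formula.fvars_finite (φ : Formula L) : φ.fvars.Finite := by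
  induction φ <;> simp [Formula.fvars, Set.finite_iUnion, Term.fvars_finite, *]

theorem Formula.val_eq_eq_one_iff [Nontrivial A] {M : Structure L A} {t₁ t₂ : Term L}
    {v : ℕ → M.Dom} : (Formula.eq t₁ t₂).val M v = 1 ↔ t₁.val M v = t₂.val M v := by
  simp [Formula.val, bot_ne_one]

section Preservation

variable {M N : Structure L A} {g : M.Dom → N.Dom}

theorem IsHom.val_term (hg : IsHom M N g) (v : ℕ → M.Dom) :
    ∀ t : Term L, t.val N (g ∘ v) = g (t.val M v)
  | .var _ => rfl
  | .func f ts => by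
    rw [Term.val, Term.val, hg.map_fun]
    exact congrArg (N.funMap f) <| funext fun k => hg.val_term v (ts k)

theorem QFConj.val_isHom [Nontrivial A] {ψ : Formula L} (hψ : QFConj ψ) (hg : IsHom M N g)
    {v : ℕ → M.Dom} (h : ψ.val M v = 1) : ψ.val N (g ∘ v) = 1 := by
  induction hψ generalizing v with
  | atom ha =>
    cases ha with
    | rel P ts =>
      simp only [Formula.val, hg.val_term]
      exact hg.map_rel P _ h
    | eq t₁ t₂ =>
      rw [Formula.val_eq_eq_one_iff, hg.val_term, hg.val_term]
      exact congrArg g (Formula.val_eq_eq_one_iff.1 h)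
  | sconj _ _ ih₁ ih₂ =>
    rw [Formula.val, mul_eq_one_iff] at h ⊢
    exact ⟨ih₁ h.1, ih₂ h.2⟩
  | wconj _ _ ih₁ ih₂ =>
    rw [Formula.val, inf_eq_one_iff] at h ⊢
    exact ⟨ih₁ h.1, ih₂ h.2⟩

variable {I : Type u} [Nonempty I] {Ms : I → Structure L A}

theorem WeakProdData.val_term (W : WeakProdData Ms) (v : ℕ → ∀ i, (Ms i).Dom) (i : I) :
    ∀ t : Term L, t.val W.toStructure v i = t.val (Ms i) (fun n => v n i)
  | .var _ => rfl
  | .func f ts => congrArg ((Ms i).funMap f) <| funext fun k => W.val_term v i (ts k)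

theorem QFConj.val_toStructure [Nontrivial A] {ψ : Formula L} (hψ : QFConj ψ)
    (W : WeakProdData Ms) {v : ℕ → ∀ i, (Ms i).Dom}
    (h : ∀ i, ψ.val (Ms i) (fun n => v n i) = 1) : ψ.val W.toStructure v = 1 := by
  induction hψ generalizing v with
  | atom ha =>
    cases ha with
    | rel P ts =>
      refine (W.rel_one_iff P _).2 fun i => ?_
      simp only [W.val_term]
      exact h i
    | eq t₁ t₂ =>
      refine Formula.val_eq_eq_one_iff.2 (funext fun i => ?_)
      simpa only [W.val_term] using Formula.val_eq_eq_one_iff.1 (h i)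
  | sconj _ _ ih₁ ih₂ =>
    simp only [Formula.val, mul_eq_one_iff, forall_and] at h ⊢
    exact ⟨ih₁ h.1, ih₂ h.2⟩
  | wconj _ _ ih₁ ih₂ =>
    simp only [Formula.val, inf_eq_one_iff, forall_and] at h ⊢
    exact ⟨ih₁ h.1, ih₂ h.2⟩

end Preservation

def Formula.exs (xs : List ℕ) (φ : Formula L) : Formula L := xs.foldr .ex φ

theorem Formula.val_exs_eq_one_iff {M : Structure L A} {xs : List ℕ} {φ : Formula L}
    {v : ℕ → M.Dom} :
    (Formula.exs xs φ).val M v = 1 ↔ ∃ w, (∀ n ∉ xs, w n = v n) ∧ φ.val M w = 1 := by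
  induction xs generalizing v with
  | nil =>
    refine ⟨fun h => ⟨v, fun _ _ => rfl, h⟩, fun ⟨w, hw, h⟩ => ?_⟩
    rwa [funext fun n => hw n List.not_mem_nil] at h
  | cons x xs ih =>
    simp only [Formula.exs, List.foldr_cons, Formula.val, iSup_eq_one_iff] at ih ⊢
    simp only [ih]
    constructor
    · rintro ⟨a, w, hw, h⟩
      refine ⟨w, fun n hn => ?_, h⟩
      rw [List.mem_cons, not_or] at hn
      rw [hw n hn.2, Function.update_of_ne hn.1]
    · rintro ⟨w, hw, h⟩
      refine ⟨w x, w, fun n hn => ?_, h⟩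
      rcases eq_or_ne n x with rfl | hx
      · simp
      · rw [Function.update_of_ne hx, hw n (by simp [hx, hn])]

theorem Formula.fvars_exs (xs : List ℕ) (φ : Formula L) :
    (Formula.exs xs φ).fvars = φ.fvars \ {n | n ∈ xs} := by
  induction xs with
  | nil => simp [Formula.exs]
  | cons x xs ih =>
    ext n
    simp only [Formula.exs, List.foldr_cons, Formula.fvars] at ih ⊢
    simp [ih, and_assoc, and_comm]

theorem Formula.valid_exs_iff {M : Structure L A} {xs : List ℕ} {φ : Formula L}
    (h : φ.fvars ⊆ {n | n ∈ xs}) : Valid M (Formula.exs xs φ) ↔ ∃ w, φ.val M w = 1 := by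
  refine ⟨fun hv => ?_, fun ⟨w, hw⟩ v => ?_⟩
  · obtain ⟨w, -, hw⟩ := Formula.val_exs_eq_one_iff.1 (hv fun _ => Classical.arbitrary _)
    exact ⟨w, hw⟩
  · refine Formula.val_exs_eq_one_iff.2 ⟨fun n => if n ∈ xs then w n else v n,
      fun n hn => if_neg hn, (Formula.val_congr fun n hn => if_pos (h hn)).trans hw⟩

theorem IsPP.exists_eq_exs {α : Formula L} (hα : IsPP α) :
    ∃ xs ψ, QFConj ψ ∧ α = Formula.exs xs ψ := by
  induction hα with
  | base hψ => exact ⟨[], _, hψ, rfl⟩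
  | ex x _ ih =>
    obtain ⟨xs, ψ, hψ, rfl⟩ := ih
    exact ⟨x :: xs, ψ, hψ, rfl⟩

theorem IsPP.exs {ψ : Formula L} (hψ : QFConj ψ) (xs : List ℕ) : IsPP (Formula.exs xs ψ) := by
  induction xs with
  | nil => exact .base hψ
  | cons x _ ih => exact .ex x ih

theorem IsPP.exists_valid_iff {α : Formula L} (hα : IsPP α) (hs : α.IsSentence) :
    ∃ ψ, QFConj ψ ∧ ∀ M : Structure L A, Valid M α ↔ ∃ w, ψ.val M w = 1 := by
  obtain ⟨xs, ψ, hψ, rfl⟩ := hα.exists_eq_exs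
  have hsub : ψ.fvars ⊆ {n | n ∈ xs} := by
    simpa [Formula.IsSentence, Formula.fvars_exs, Set.sdiff_eq_empty] using hs
  exact ⟨ψ, hψ, fun M => Formula.valid_exs_iff hsub⟩

theorem QFConj.exists_isPP_valid_iff {ψ : Formula L} (hψ : QFConj ψ) :
    ∃ α, IsPP α ∧ α.IsSentence ∧ ∀ M : Structure L A, Valid M α ↔ ∃ w, ψ.val M w = 1 := by
  set xs := ψ.fvars_finite.toFinset.toList
  have hsub : ψ.fvars ⊆ {n | n ∈ xs} := fun n hn => by simpa [xs] using hn
  refine ⟨Formula.exs xs ψ, IsPP.exs hψ xs, ?_, fun M => Formula.valid_exs_iff hsub⟩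
  simpa [Formula.IsSentence, Formula.fvars_exs, Set.sdiff_eq_empty] using hsub

theorem IsPP.valid_of_isHom [Nontrivial A] {α : Formula L} (hα : IsPP α) (hs : α.IsSentence)
    {M N : Structure L A} {g : M.Dom → N.Dom} (hg : IsHom M N g) (h : Valid M α) :
    Valid N α := by
  obtain ⟨ψ, hψ, hiff⟩ := hα.exists_valid_iff (A := A) hs
  obtain ⟨w, hw⟩ := (hiff M).1 h
  exact (hiff N).2 ⟨g ∘ w, hψ.val_isHom hg hw⟩

theorem IsPP.valid_toStructure [Nontrivial A] {α : Formula L} (hα : IsPP α)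
    (hs : α.IsSentence) {I : Type u} [Nonempty I] {Ms : I → Structure L A}
    (W : WeakProdData Ms) (h : ∀ i, Valid (Ms i) α) : Valid W.toStructure α := by
  obtain ⟨ψ, hψ, hiff⟩ := hα.exists_valid_iff (A := A) hs
  choose w hw using fun i => (hiff (Ms i)).1 (h i)
  exact (hiff _).2 ⟨fun n i => w i n, hψ.val_toStructure W hw⟩

def Term.rename (ρ : ℕ → ℕ) : Term L → Term L
  | .var n => .var (ρ n)
  | .func f ts => .func f fun k => (ts k).rename ρ

-- Only used on quantifier-free formulas: under a binder it is faithful only for injective `ρ`.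
def Formula.rename (ρ : ℕ → ℕ) : Formula L → Formula L
  | .rel P ts => .rel P fun k => (ts k).rename ρ
  | .eq t₁ t₂ => .eq (t₁.rename ρ) (t₂.rename ρ)
  | .sconj φ ψ => .sconj (φ.rename ρ) (ψ.rename ρ)
  | .wconj φ ψ => .wconj (φ.rename ρ) (ψ.rename ρ)
  | .wdisj φ ψ => .wdisj (φ.rename ρ) (ψ.rename ρ)
  | .impl φ ψ => .impl (φ.rename ρ) (ψ.rename ρ)
  | .all x φ => .all (ρ x) (φ.rename ρ)
  | .ex x φ => .ex (ρ x) (φ.rename ρ)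

theorem Term.val_rename {M : Structure L A} (ρ : ℕ → ℕ) (v : ℕ → M.Dom) :
    ∀ t : Term L, (t.rename ρ).val M v = t.val M (v ∘ ρ)
  | .var _ => rfl
  | .func f ts => congrArg (M.funMap f) <| funext fun k => Term.val_rename ρ v (ts k)

theorem QFConj.rename {ψ : Formula L} (hψ : QFConj ψ) (ρ : ℕ → ℕ) : QFConj (ψ.rename ρ) := by
  induction hψ with
  | atom ha =>
    cases ha with
    | rel => exact .atom (.rel ..)
    | eq => exact .atom (.eq ..)
  | sconj _ _ ih₁ ih₂ => exact .sconj ih₁ ih₂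
  | wconj _ _ ih₁ ih₂ => exact .wconj ih₁ ih₂

theorem QFConj.val_rename {ψ : Formula L} (hψ : QFConj ψ) {M : Structure L A} (ρ : ℕ → ℕ)
    (v : ℕ → M.Dom) : (ψ.rename ρ).val M v = ψ.val M (v ∘ ρ) := by
  induction hψ with
  | atom ha => cases ha <;> simp only [Formula.rename, Formula.val, Term.val_rename]
  | sconj _ _ ih₁ ih₂ | wconj _ _ ih₁ ih₂ => simp only [Formula.rename, Formula.val, ih₁, ih₂]

theorem exists_comp_two_mul_eq {D : Type*} (w₁ w₂ : ℕ → D) :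
    ∃ w : ℕ → D, (w ∘ fun n => 2 * n) = w₁ ∧ (w ∘ fun n => 2 * n + 1) = w₂ :=
  ⟨fun n => if n % 2 = 0 then w₁ (n / 2) else w₂ (n / 2),
    funext fun n => by simp,
    funext fun n => by simp [Nat.add_mod, show (2 * n + 1) / 2 = n by omega]⟩

theorem exists_isPP_valid_iff_and {α β : Formula L} (hα : IsPP α) (hαs : α.IsSentence)
    (hβ : IsPP β) (hβs : β.IsSentence) :
    ∃ γ, IsPP γ ∧ γ.IsSentence ∧ ∀ M : Structure L A, Valid M γ ↔ Valid M α ∧ Valid M β := by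
  obtain ⟨ψ, hψ, hαiff⟩ := hα.exists_valid_iff (A := A) hαs
  obtain ⟨χ, hχ, hβiff⟩ := hβ.exists_valid_iff (A := A) hβs
  -- put the variables of `ψ` on the even numbers and those of `χ` on the odd ones
  obtain ⟨γ, hγ, hγs, hγiff⟩ := ((hψ.rename fun n => 2 * n).wconj
    (hχ.rename fun n => 2 * n + 1)).exists_isPP_valid_iff (A := A)
  refine ⟨γ, hγ, hγs, fun M => ?_⟩
  simp only [hγiff, hαiff, hβiff, Formula.val, inf_eq_one_iff, hψ.val_rename, hχ.val_rename]
  refine ⟨fun ⟨w, h₁, h₂⟩ => ⟨⟨_, h₁⟩, ⟨_, h₂⟩⟩, fun ⟨⟨w₁, h₁⟩, ⟨w₂, h₂⟩⟩ => ?_⟩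
  obtain ⟨w, rfl, rfl⟩ := exists_comp_two_mul_eq w₁ w₂
  exact ⟨w, h₁, h₂⟩

theorem exists_isPP_valid_iff_forall_mem (T : Finset (Formula L))
    (hT : ∀ α ∈ T, IsPP α ∧ α.IsSentence) :
    ∃ γ, IsPP γ ∧ γ.IsSentence ∧ ∀ M : Structure L A, Valid M γ ↔ ∀ α ∈ T, Valid M α := by
  induction T using Finset.induction_on with
  | empty =>
    obtain ⟨γ, hγ, hγs, hγiff⟩ :=
      (QFConj.atom (.eq (.var 0) (.var 0)) : QFConj (L := L) _).exists_isPP_valid_iff (A := A)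
    refine ⟨γ, hγ, hγs, fun M => ?_⟩
    simp [hγiff, Formula.val]
  | insert α T _ ih =>
    rw [Finset.forall_mem_insert] at hT
    obtain ⟨γ, hγ, hγs, hγiff⟩ := ih hT.2
    obtain ⟨δ, hδ, hδs, hδiff⟩ := exists_isPP_valid_iff_and (A := A) hT.1.1 hT.1.2 hγ hγs
    exact ⟨δ, hδ, hδs, fun M => by rw [hδiff, hγiff, Finset.forall_mem_insert]⟩

namespace Ultrafilter

variable {I β : Type*} (U : Ultrafilter I)

theorem exists_eventually_eq_of_finite [Finite β] (f : I → β) : ∃ b, ∀ᶠ i in U, f i = b := by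
  obtain ⟨b, hb⟩ := (U.map f).eq_pure_of_finite
  exact ⟨b, mem_map.1 (hb ▸ Set.mem_singleton b : ({b} : Set β) ∈ U.map f)⟩

def limOfFinite [Finite β] (f : I → β) : β := (U.exists_eventually_eq_of_finite f).choose

variable {U} [Finite β]

theorem eventually_eq_limOfFinite (f : I → β) : ∀ᶠ i in U, f i = U.limOfFinite f :=
  (U.exists_eventually_eq_of_finite f).choose_spec

theorem limOfFinite_eq_iff {f : I → β} {b : β} : U.limOfFinite f = b ↔ ∀ᶠ i in U, f i = b := by
  refine ⟨fun h => h ▸ eventually_eq_limOfFinite f, fun h => ?_⟩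
  obtain ⟨i, h₁, h₂⟩ := ((eventually_eq_limOfFinite f).and h).exists
  exact h₁.symm.trans h₂

theorem limOfFinite_congr {f g : I → β} (h : ∀ᶠ i in U, f i = g i) :
    U.limOfFinite f = U.limOfFinite g :=
  limOfFinite_eq_iff.2 <| (h.and (eventually_eq_limOfFinite g)).mono fun _ h => h.1.trans h.2

theorem limOfFinite_map₂ (op : β → β → β) (f g : I → β) :
    U.limOfFinite (fun i => op (f i) (g i)) = op (U.limOfFinite f) (U.limOfFinite g) :=
  limOfFinite_eq_iff.2 <| ((eventually_eq_limOfFinite f).and (eventually_eq_limOfFinite g)).mono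
    fun _ h => by rw [h.1, h.2]

theorem limOfFinite_ite (p : I → Prop) [DecidablePred p] [Decidable (∀ᶠ i in U, p i)] (a b : β) :
    U.limOfFinite (fun i => if p i then a else b) = if ∀ᶠ i in U, p i then a else b := by
  split_ifs with h
  · exact limOfFinite_eq_iff.2 (h.mono fun _ hi => if_pos hi)
  · exact limOfFinite_eq_iff.2 ((U.eventually_not.2 h).mono fun _ hi => if_neg hi)

theorem limOfFinite_mono [Preorder β] {f g : I → β} (h : ∀ᶠ i in U, f i ≤ g i) :
    U.limOfFinite f ≤ U.limOfFinite g := by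
  obtain ⟨i, hfg, hf, hg⟩ :=
    (h.and ((eventually_eq_limOfFinite f).and (eventually_eq_limOfFinite g))).exists
  exact hf ▸ hg ▸ hfg

end Ultrafilter

namespace MTLChain

variable {A : Type u} [MTLChain A] {I : Type*} {U : Ultrafilter I} {D : I → Type*}
  [∀ i, Nonempty (D i)]

theorem limOfFinite_iSup (g : ∀ i, D i → A) :
    U.limOfFinite (fun i => ⨆ d, g i d) = ⨆ w : ∀ i, D i, U.limOfFinite fun i => g i (w i) := by
  choose w hw using fun i => exists_eq_iSup (g i)
  refine le_antisymm ?_ (iSup_le fun w' =>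
    Ultrafilter.limOfFinite_mono (.of_forall fun i => le_iSup (g i) (w' i)))
  calc U.limOfFinite (fun i => ⨆ d, g i d) = U.limOfFinite fun i => g i (w i) := by simp only [hw]
    _ ≤ _ := le_iSup (fun w' => U.limOfFinite fun i => g i (w' i)) w

theorem limOfFinite_iInf (g : ∀ i, D i → A) :
    U.limOfFinite (fun i => ⨅ d, g i d) = ⨅ w : ∀ i, D i, U.limOfFinite fun i => g i (w i) := by
  choose w hw using fun i => exists_eq_iInf (g i)
  refine le_antisymm (le_iInf fun w' =>
    Ultrafilter.limOfFinite_mono (.of_forall fun i => iInf_le (g i) (w' i))) ?_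
  calc _ ≤ U.limOfFinite (fun i => g i (w i)) :=
        iInf_le (fun w' => U.limOfFinite fun i => g i (w' i)) w
    _ = U.limOfFinite fun i => ⨅ d, g i d := by simp only [hw]

end MTLChain

theorem Function.update_apply_pi {ι : Type*} {D : ι → Type*} (V : ℕ → ∀ i, D i) (x : ℕ)
    (w : ∀ i, D i) (i : ι) :
    (fun n => Function.update V x w n i) = Function.update (fun n => V n i) x (w i) :=
  funext fun n => Function.apply_update (fun _ y => y i) V x w n

namespace Structure

variable {I : Type u} (U : Ultrafilter I) (Ns : I → Structure L A)

def ultraproduct : Structure L A where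
  Dom := Quotient ((U : Filter I).productSetoid fun i => (Ns i).Dom)
  dom_nonempty := ⟨Quotient.mk _ fun _ => Classical.arbitrary _⟩
  funMap f d := Quotient.mk _ fun i => (Ns i).funMap f fun k => (d k).out i
  relMap P d := U.limOfFinite fun i => (Ns i).relMap P fun k => (d k).out i

def ultraproduct.mk (x : ∀ i, (Ns i).Dom) : (ultraproduct U Ns).Dom := Quotient.mk _ x

namespace ultraproduct

variable {U Ns}

theorem mk_eq_mk_iff {x y : ∀ i, (Ns i).Dom} : mk U Ns x = mk U Ns y ↔ ∀ᶠ i in U, x i = y i :=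
  Quotient.eq

theorem mk_surjective : Function.Surjective (mk U Ns) := Quotient.mk_surjective

theorem eventually_out_mk_eq {n : ℕ} (x : Fin n → ∀ i, (Ns i).Dom) :
    ∀ᶠ i in U, ∀ k, (mk U Ns (x k)).out i = x k i :=
  Filter.eventually_all.2 fun k => Quotient.exact (Quotient.out_eq (mk U Ns (x k)))

theorem funMap_mk (f : L.Func) (x : Fin (L.funcAr f) → ∀ i, (Ns i).Dom) :
    (ultraproduct U Ns).funMap f (fun k => mk U Ns (x k)) =
      mk U Ns fun i => (Ns i).funMap f fun k => x k i :=
  mk_eq_mk_iff.2 <| (eventually_out_mk_eq x).mono fun _ h => congrArg _ (funext h)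

theorem relMap_mk (P : L.Pred) (x : Fin (L.predAr P) → ∀ i, (Ns i).Dom) :
    (ultraproduct U Ns).relMap P (fun k => mk U Ns (x k)) =
      U.limOfFinite fun i => (Ns i).relMap P fun k => x k i :=
  Ultrafilter.limOfFinite_congr <| (eventually_out_mk_eq x).mono fun _ h => congrArg _ (funext h)

theorem val_term (V : ℕ → ∀ i, (Ns i).Dom) : ∀ t : Term L,
    t.val (ultraproduct U Ns) (mk U Ns ∘ V) = mk U Ns fun i => t.val (Ns i) fun n => V n i
  | .var _ => rfl
  | .func f ts => by
    rw [Term.val, funext fun k => val_term V (ts k)]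
    exact funMap_mk f _

theorem val_formula : ∀ (φ : Formula L) (V : ℕ → ∀ i, (Ns i).Dom),
    φ.val (ultraproduct U Ns) (mk U Ns ∘ V) = U.limOfFinite fun i => φ.val (Ns i) fun n => V n i
  | .rel P ts, V => by
    simp only [Formula.val, val_term]
    exact relMap_mk P _
  | .eq t₁ t₂, V => by
    simp only [Formula.val, val_term]
    rw [Ultrafilter.limOfFinite_ite]
    exact if_congr mk_eq_mk_iff rfl rfl
  | .sconj φ ψ, V => by
    simp only [Formula.val, val_formula φ, val_formula ψ]
    exact (Ultrafilter.limOfFinite_map₂ (· * ·) _ _).symm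
  | .wconj φ ψ, V => by
    simp only [Formula.val, val_formula φ, val_formula ψ]
    exact (Ultrafilter.limOfFinite_map₂ (· ⊓ ·) _ _).symm
  | .wdisj φ ψ, V => by
    simp only [Formula.val, val_formula φ, val_formula ψ]
    exact (Ultrafilter.limOfFinite_map₂ (· ⊔ ·) _ _).symm
  | .impl φ ψ, V => by
    simp only [Formula.val, val_formula φ, val_formula ψ]
    exact (Ultrafilter.limOfFinite_map₂ MTLChain.resid _ _).symm
  | .all x φ, V => by
    have hupd (w) : Function.update (mk U Ns ∘ V) x (mk U Ns w) = mk U Ns ∘ Function.update V x w :=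
      (Function.comp_update ..).symm
    simp only [Formula.val, MTLChain.limOfFinite_iInf, ← Function.update_apply_pi,
      ← val_formula φ, ← hupd]
    exact (mk_surjective.iInf_comp fun a => φ.val _ (Function.update (mk U Ns ∘ V) x a)).symm
  | .ex x φ, V => by
    have hupd (w) : Function.update (mk U Ns ∘ V) x (mk U Ns w) = mk U Ns ∘ Function.update V x w :=
      (Function.comp_update ..).symm
    simp only [Formula.val, MTLChain.limOfFinite_iSup, ← Function.update_apply_pi,
      ← val_formula φ, ← hupd]
    exact (mk_surjective.iSup_comp fun a => φ.val _ (Function.update (mk U Ns ∘ V) x a)).symm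

theorem valid_iff {γ : Formula L} (hγ : γ.IsSentence) :
    Valid (ultraproduct U Ns) γ ↔ ∀ᶠ i in U, Valid (Ns i) γ := by
  let V : ℕ → ∀ i, (Ns i).Dom := fun _ _ => Classical.arbitrary _
  rw [hγ.valid_iff (mk U Ns ∘ V), val_formula, Ultrafilter.limOfFinite_eq_iff]
  exact Filter.eventually_congr (.of_forall fun i => (hγ.valid_iff _).symm)

end ultraproduct

end Structure

theorem Ultrafilter.exists_forall_eventually_mem (ι : Type*) :
    ∃ U : Ultrafilter (Finset ι), ∀ i, ∀ᶠ F in (U : Filter (Finset ι)), i ∈ F := by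
  obtain ⟨U, hU⟩ := Ultrafilter.exists_le (Filter.atTop : Filter (Finset ι))
  exact ⟨U, fun i => Filter.Eventually.mono (hU (Filter.eventually_ge_atTop {i}))
    fun _ => Finset.singleton_subset_iff.1⟩

theorem exists_finset_models_imp_valid {S : Set (Formula L)} (hS : ∀ α ∈ S, α.IsSentence)
    {φ : Formula L} (hφ : φ.IsSentence) (h : ∀ N : Structure L A, Models N S → Valid N φ) :
    ∃ T : Finset (Formula L), ↑T ⊆ S ∧ ∀ N : Structure L A, Models N ↑T → Valid N φ := by
  by_contra! hT
  choose Ns hNs hNφ using fun T : Finset (Formula L) =>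
    hT (T.filter (· ∈ S)) fun α hα => (Finset.mem_filter.1 hα).2
  obtain ⟨U, hU⟩ := Ultrafilter.exists_forall_eventually_mem (Formula L)
  have hmodels : Models (Structure.ultraproduct U Ns) S := fun α hα =>
    (Structure.ultraproduct.valid_iff (hS α hα)).2 <|
      (hU α).mono fun T hαT => hNs T α (Finset.mem_filter.2 ⟨hαT, hα⟩)
  obtain ⟨T, hT⟩ := ((Structure.ultraproduct.valid_iff hφ).1 (h _ hmodels)).exists
  exact hNφ T hT

def ppConsequences (A : Type u) [MTLChain A] (φ : Formula L) : Set (Formula L) :=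
  {α | IsPP α ∧ α.IsSentence ∧ ∀ M : Structure L A, Valid M φ → Valid M α}

section WeakProduct

variable {I : Type u} [Nonempty I] {Ms : I → Structure L A}

def WeakProdData.ofDirProd (Ms : I → Structure L A) : WeakProdData Ms where
  relMap := (dirProd Ms).relMap
  rel_one_iff _ _ := iInf_eq_one_iff _

theorem WeakProdData.isHom_eval (W : WeakProdData Ms) (i : I) :
    IsHom W.toStructure (Ms i) fun x => x i :=
  ⟨fun _ _ => rfl, fun P d h => (W.rel_one_iff P d).1 h i⟩

end WeakProduct

theorem exists_model_forall_isPP_valid_imp [Nontrivial A] {φ : Formula L}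
    (hcons : ∃ M : Structure L A, Valid M φ)
    (Hprod : ∀ (I : Type u) [Nonempty I] (Ms : I → Structure L A),
      (∀ i, Valid (Ms i) φ) → ∀ W : WeakProdData Ms, Valid W.toStructure φ)
    {N : Structure L A} (hN : Models N (ppConsequences A φ)) :
    ∃ M : Structure L A, Valid M φ ∧ ∀ α, IsPP α → α.IsSentence → Valid M α → Valid N α := by
  let J := {β : Formula L // IsPP β ∧ β.IsSentence ∧ ¬ Valid N β}
  have hfail (β : J) : ∃ M : Structure L A, Valid M φ ∧ ¬ Valid M β.1 := by
    by_contra! h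
    exact β.2.2.2 (hN β.1 ⟨β.2.1, β.2.2.1, h⟩)
  choose Ms hMsφ hMsβ using hfail
  -- one factor refuting each pp sentence that fails in `N`, plus one model of `φ`
  let Ms' : Option J → Structure L A := fun j => j.elim hcons.choose Ms
  let W := WeakProdData.ofDirProd Ms'
  refine ⟨W.toStructure, Hprod _ Ms' (Option.rec hcons.choose_spec hMsφ) W,
    fun α hα hαs hWα => ?_⟩
  by_contra hNα
  exact hMsβ ⟨α, hα, hαs, hNα⟩ (hα.valid_of_isHom hαs (W.isHom_eval (some ⟨α, hα, hαs, hNα⟩)) hWα)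

def Formula.wconjList (l : List (Formula L)) : Formula L := l.foldr .wconj (.eq (.var 0) (.var 0))

theorem QFConj.wconjList {l : List (Formula L)} (h : ∀ ψ ∈ l, QFConj ψ) :
    QFConj (Formula.wconjList l) := by
  induction l with
  | nil => exact .atom (.eq ..)
  | cons ψ l ih => exact .wconj (h ψ (List.mem_cons_self ..)) (ih fun χ hχ => h χ (.tail _ hχ))

theorem Formula.val_wconjList_eq_one_iff {M : Structure L A} {l : List (Formula L)}
    {v : ℕ → M.Dom} : (Formula.wconjList l).val M v = 1 ↔ ∀ ψ ∈ l, ψ.val M v = 1 := by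
  induction l with
  | nil => simp [Formula.wconjList, Formula.val]
  | cons ψ l ih =>
    rw [List.forall_mem_cons, ← ih]
    exact inf_eq_one_iff

def AtomicFact (M : Structure L A) : Type u :=
  {pd : Σ P : L.Pred, Fin (L.predAr P) → M.Dom // M.relMap pd.1 pd.2 = 1} ⊕
    (Σ f : L.Func, Fin (L.funcAr f) → M.Dom)

namespace AtomicFact

variable {M : Structure L A}

def Holds {N : Structure L A} (σ : M.Dom → N.Dom) : AtomicFact M → Prop
  | .inl ⟨⟨P, d⟩, _⟩ => N.relMap P (σ ∘ d) = 1
  | .inr ⟨f, d⟩ => σ (M.funMap f d) = N.funMap f (σ ∘ d)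

def support : AtomicFact M → Set M.Dom
  | .inl ⟨⟨_, d⟩, _⟩ => Set.range d
  | .inr ⟨f, d⟩ => insert (M.funMap f d) (Set.range d)

def toFormula (idx : M.Dom → ℕ) : AtomicFact M → Formula L
  | .inl ⟨⟨P, d⟩, _⟩ => .rel P fun k => .var (idx (d k))
  | .inr ⟨f, d⟩ => .eq (.var (idx (M.funMap f d))) (.func f fun k => .var (idx (d k)))

theorem support_finite : ∀ r : AtomicFact M, r.support.Finite
  | .inl _ => Set.finite_range _
  | .inr _ => (Set.finite_range _).insert _

theorem holds_of_eqOn {σ : M.Dom → M.Dom} :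
    ∀ r : AtomicFact M, (∀ e ∈ r.support, σ e = e) → r.Holds σ
  | .inl ⟨⟨P, d⟩, hd⟩, h => by
    rwa [Holds, show σ ∘ d = d from funext fun k => h _ ⟨k, rfl⟩]
  | .inr ⟨f, d⟩, h => by
    rw [Holds, show σ ∘ d = d from funext fun k => h _ (.inr ⟨k, rfl⟩)]
    exact h _ (.inl rfl)

theorem qfConj_toFormula (idx : M.Dom → ℕ) : ∀ r : AtomicFact M, QFConj (r.toFormula idx)
  | .inl _ => .atom (.rel ..)
  | .inr _ => .atom (.eq ..)

theorem val_toFormula_eq_one_iff [Nontrivial A] {N : Structure L A} (idx : M.Dom → ℕ)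
    (w : ℕ → N.Dom) : ∀ r : AtomicFact M, (r.toFormula idx).val N w = 1 ↔ r.Holds (w ∘ idx)
  | .inl _ => Iff.rfl
  | .inr _ => Formula.val_eq_eq_one_iff

end AtomicFact

theorem exists_holds_of_forall_isPP [Nontrivial A] {M N : Structure L A}
    (h : ∀ α, IsPP α → α.IsSentence → Valid M α → Valid N α) (F : Finset (AtomicFact M)) :
    ∃ σ : M.Dom → N.Dom, ∀ r ∈ F, r.Holds σ := by
  set S := ⋃ r ∈ F, r.support
  -- name the finitely many elements involved in `F` by distinct variables
  obtain ⟨idx, hidx⟩ := Set.countable_iff_exists_injOn.1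
    (F.finite_toSet.biUnion fun r _ => r.support_finite).countable
  set ψ := Formula.wconjList (F.toList.map (AtomicFact.toFormula idx))
  have hψ : QFConj ψ := .wconjList (by simpa using fun r _ => r.qfConj_toFormula idx)
  have hψval (K : Structure L A) (w : ℕ → K.Dom) :
      ψ.val K w = 1 ↔ ∀ r ∈ F, r.Holds (w ∘ idx) := by
    simp [ψ, Formula.val_wconjList_eq_one_iff, AtomicFact.val_toFormula_eq_one_iff]
  obtain ⟨α, hα, hαs, hαiff⟩ := hψ.exists_isPP_valid_iff (A := A)
  have hMα : Valid M α := (hαiff M).2 ⟨Function.invFunOn idx S, (hψval M _).2 fun r hr =>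
    r.holds_of_eqOn fun e he => hidx.leftInvOn_invFunOn (Set.mem_biUnion hr he)⟩
  obtain ⟨w, hw⟩ := (hαiff N).1 (h α hα hαs hMα)
  exact ⟨w ∘ idx, (hψval N w).1 hw⟩

open Structure.ultraproduct in
theorem exists_isHom_ultrapower [Nontrivial A] {M N : Structure L A}
    (h : ∀ α, IsPP α → α.IsSentence → Valid M α → Valid N α) :
    ∃ (U : Ultrafilter (Finset (AtomicFact M)))
      (g : M.Dom → (Structure.ultraproduct U fun _ => N).Dom), IsHom M _ g := by
  choose σ hσ using exists_holds_of_forall_isPP h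
  obtain ⟨U, hU⟩ := Ultrafilter.exists_forall_eventually_mem (AtomicFact M)
  refine ⟨U, fun e => mk U _ fun F => σ F e, fun f d => ?_, fun P d hd => ?_⟩
  · exact (mk_eq_mk_iff.2 <| (hU (.inr ⟨f, d⟩)).mono fun F hF => hσ F _ hF).trans
      (funMap_mk f _).symm
  · exact (relMap_mk P _).trans <| Ultrafilter.limOfFinite_eq_iff.2 <|
      (hU (.inl ⟨⟨P, d⟩, hd⟩)).mono fun F hF => hσ F _ hF

theorem valid_of_models_ppConsequences [Nontrivial A] {φ : Formula L} (hφ : φ.IsSentence)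
    (hcons : ∃ M : Structure L A, Valid M φ)
    (Hhom : ∀ (M N : Structure L A) (g : M.Dom → N.Dom), IsHom M N g → Valid M φ → Valid N φ)
    (Hprod : ∀ (I : Type u) [Nonempty I] (Ms : I → Structure L A),
      (∀ i, Valid (Ms i) φ) → ∀ W : WeakProdData Ms, Valid W.toStructure φ)
    (N : Structure L A) (hN : Models N (ppConsequences A φ)) : Valid N φ := by
  obtain ⟨M, hMφ, hMN⟩ := exists_model_forall_isPP_valid_imp hcons Hprod hN
  obtain ⟨U, g, hg⟩ := exists_isHom_ultrapower hMN
  exact Filter.eventually_const.1 ((Structure.ultraproduct.valid_iff hφ).1 (Hhom M _ g hg hMφ))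

/-- **Corollary: single-sentence pp-characterization.**  A consistent sentence
`φ` is 1-equivalent to a positive-primitive sentence iff the class of
`A`-models of `φ` is closed under homomorphisms and weak `A`-direct products. -/
theorem pp_single_sentence_char {A : Type u} [MTLChain A] {L : Lang.{u}}
    (φ : Formula L) (hφ : φ.IsSentence)
    (hcons : ∃ M : Structure L A, Valid M φ) :
    (∃ α : Formula L, IsPP α ∧ α.IsSentence ∧
        ∀ M : Structure L A, Valid M φ ↔ Valid M α) ↔
      ((∀ (M N : Structure L A) (g : M.Dom → N.Dom),
          IsHom M N g → Valid M φ → Valid N φ) ∧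
       (∀ (I : Type u) [Nonempty I] (Ms : I → Structure L A),
          (∀ i, Valid (Ms i) φ) → ∀ W : WeakProdData Ms, Valid W.toStructure φ)) := by
  rcases subsingleton_or_nontrivial A with hA | hA
  · have hvalid (M : Structure L A) (ψ : Formula L) : Valid M ψ := fun _ => Subsingleton.elim _ _
    obtain ⟨α, hα, hαs, -⟩ := exists_isPP_valid_iff_forall_mem (A := A) ∅ (by simp)
    exact iff_of_true ⟨α, hα, hαs, fun M => iff_of_true (hvalid M φ) (hvalid M α)⟩
      ⟨fun _ N _ _ _ => hvalid N φ, fun _ _ _ _ W => hvalid W.toStructure φ⟩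
  refine ⟨fun ⟨α, hα, hαs, hφα⟩ => ⟨fun M N g hg hM => ?_, fun I _ Ms hMs W => ?_⟩,
    fun ⟨Hhom, Hprod⟩ => ?_⟩
  · exact (hφα N).2 (hα.valid_of_isHom hαs hg ((hφα M).1 hM))
  · exact (hφα _).2 (hα.valid_toStructure hαs W fun i => (hφα (Ms i)).1 (hMs i))
  obtain ⟨T, hTS, hT⟩ := exists_finset_models_imp_valid (fun α hα => hα.2.1) hφ
    (valid_of_models_ppConsequences hφ hcons Hhom Hprod)
  obtain ⟨α, hα, hαs, hαT⟩ :=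
    exists_isPP_valid_iff_forall_mem (A := A) T fun β hβ => ⟨(hTS hβ).1, (hTS hβ).2.1⟩
  exact ⟨α, hα, hαs, fun M => ⟨fun hM => (hαT M).2 fun β hβ => (hTS hβ).2.2 M hM,
    fun hM => hT M fun β hβ => (hαT M).1 hM β hβ⟩⟩
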